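/- arXiv:1107.5520 — 5 statements merged into one kernel-verified Lean document; each statement's English description precedes it below -/
import Mathlib

section
/- Let Z ⊆ ℝ^m be a rational decision maker: (1) every x ∈ ℝ^m satisfies x ∈ Z or -x ∈ Z; (2) Z is closed under addition and nonnegative scalar multiplication; (3) every componentwise nonnegative x is in Z, and no componentwise strictly negative x is in Z. Then there exist numbers p_i ≥ 0, not all zero, such that {x : Σ_i x_i p_i > 0} ⊆ Z ⊆ {x : Σ_i x_i p_i ≥ 0}. -/
/-!
The strictly negative orthant is open, convex and disjoint from the convex set `Z`, so the
Hahn–Banach theorem gives a linear functional `f` and a level `u` with `f < u` on the orthant and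
`u ≤ f` on `Z`. As `Z` is a cone, `f ≥ 0` on `Z`. Writing `f x = ∑ i, x i * p i`, the basis vectors
in `Z` force `p ≥ 0`, and completeness turns `Z ⊆ {f ≥ 0}` into `{f > 0} ⊆ Z`.
-/

open Set

theorem map_nonneg_of_le_of_smul_mem {𝕜 E F : Type*} [Field 𝕜] [LinearOrder 𝕜]
    [IsStrictOrderedRing 𝕜] [AddCommGroup E] [Module 𝕜 E] [FunLike F E 𝕜]
    [LinearMapClass F 𝕜 E 𝕜] {C : Set E} (hC : ∀ x ∈ C, ∀ t : 𝕜, 0 ≤ t → t • x ∈ C) (f : F)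
    {u : 𝕜} (hu : ∀ x ∈ C, u ≤ f x) {x : E} (hx : x ∈ C) : 0 ≤ f x := by
  by_contra! hfx
  have hu0 : u ≤ 0 := by simpa using hu _ (hC x hx 0 le_rfl)
  have := hu _ (hC x hx ((u - 1) / f x) (div_nonneg_of_nonpos (by linarith) hfx.le))
  rw [map_smul, smul_eq_mul, div_mul_cancel₀ _ hfx.ne] at this
  linarith

theorem LinearMap.apply_eq_dotProduct {ι R : Type*} [Fintype ι] [DecidableEq ι] [CommSemiring R]
    (f : (ι → R) →ₗ[R] R) (x : ι → R) : f x = x ⬝ᵥ fun i => f (Pi.single i 1) := by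
  conv_lhs => rw [pi_eq_sum_univ' x]
  simp [dotProduct]

theorem exists_dotProduct_nonneg_of_disjoint_neg {ι : Type*} [Fintype ι] {Z : Set (ι → ℝ)}
    (hconv : Convex ℝ Z) (hsmul : ∀ x ∈ Z, ∀ t : ℝ, 0 ≤ t → t • x ∈ Z) (hne : Z.Nonempty)
    (hneg : ∀ x ∈ Z, ¬∀ i, x i < 0) :
    ∃ p : ι → ℝ, p ≠ 0 ∧ ∀ x ∈ Z, 0 ≤ x ⬝ᵥ p := by
  classical
  have hdisj : Disjoint (univ.pi fun _ : ι => Iio (0 : ℝ)) Z :=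
    disjoint_left.mpr fun x hxN hxZ => hneg x hxZ fun i => hxN i (mem_univ i)
  obtain ⟨f, u, hf_neg, hf_Z⟩ := geometric_hahn_banach_open (convex_pi fun _ _ => convex_Iio 0)
    (isOpen_set_pi finite_univ fun _ _ => isOpen_Iio) hconv hdisj
  have hf : ∀ x, f x = x ⬝ᵥ fun i => f (Pi.single i 1) := f.toLinearMap.apply_eq_dotProduct
  refine ⟨fun i => f (Pi.single i 1), fun hp => ?_,
    fun x hx => hf x ▸ map_nonneg_of_le_of_smul_mem hsmul f hf_Z hx⟩
  have hf0 : ∀ x, f x = 0 := fun x => by rw [hf, hp, dotProduct_zero]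
  obtain ⟨z, hz⟩ := hne
  have := (hf_neg (-1) fun _ _ => show (-1 : ℝ) < 0 by norm_num).trans_le (hf_Z z hz)
  rw [hf0, hf0] at this
  exact lt_irrefl 0 this

/-- A rational decision maker `Z ⊆ ℝ^m` (complete, conic, monotone)
is separated by a nonzero nonnegative vector `p`:
`{x : Σ x_i p_i > 0} ⊆ Z ⊆ {x : Σ x_i p_i ≥ 0}`. -/
theorem rational_decision_maker_probabilities (m : ℕ) (Z : Set (Fin m → ℝ))
    (h_complete : ∀ x : Fin m → ℝ, x ∈ Z ∨ -x ∈ Z)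
    (h_cone : ∀ x ∈ Z, ∀ y ∈ Z, ∀ lam gam : ℝ, 0 ≤ lam → 0 ≤ gam →
      lam • x + gam • y ∈ Z)
    (h_pos : ∀ x : Fin m → ℝ, (∀ i, 0 ≤ x i) → x ∈ Z)
    (h_neg : ∀ x : Fin m → ℝ, (∀ i, x i < 0) → x ∉ Z) :
    ∃ p : Fin m → ℝ, (∀ i, 0 ≤ p i) ∧ p ≠ 0 ∧
      {x : Fin m → ℝ | 0 < ∑ i, x i * p i} ⊆ Z ∧
      Z ⊆ {x : Fin m → ℝ | 0 ≤ ∑ i, x i * p i} := by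
  have hsmul : ∀ x ∈ Z, ∀ t : ℝ, 0 ≤ t → t • x ∈ Z := fun x hx t ht => by
    simpa using h_cone x hx x hx t 0 ht le_rfl
  obtain ⟨p, hp_ne, hp_Z⟩ := exists_dotProduct_nonneg_of_disjoint_neg
    (fun x hx y hy a b ha hb _ => h_cone x hx y hy a b ha hb) hsmul ⟨0, h_pos 0 fun _ => le_rfl⟩
    fun x hx hx_neg => h_neg x hx_neg hx
  refine ⟨p, fun i => ?_, hp_ne, fun x hx => ?_, hp_Z⟩
  · simpa using hp_Z _ (h_pos (Pi.single i 1) (Pi.single_nonneg.2 zero_le_one : (0 : Fin m → ℝ) ≤ Pi.single i 1))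
  · refine (h_complete x).resolve_right fun hx_neg => ?_
    have := hp_Z _ hx_neg
    rw [neg_dotProduct] at this
    exact (neg_nonneg.1 this).not_gt hx
end

section
/- Let Z ⊆ ℝ^m be a rational decision maker (as in the finite-event rationality axioms), and suppose additionally that the all-ones contract (1,...,1) is assigned expectation 1, i.e. we normalize Σ_i p_i = 1. Then the vector p = (p_1,...,p_m) with p_i ≥ 0, Σ p_i = 1 satisfying {x : Σ x_i p_i > 0} ⊆ Z ⊆ {x : Σ x_i p_i ≥ 0} is unique. -/
/-!
Both `x ↦ ∑ xᵢ pᵢ` and `x ↦ ∑ xᵢ qᵢ` are linear functionals taking the value `1` at the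
all-ones vector `e`, and each of them is nonnegative wherever the other is positive. Shifting
`x` along `e` moves both values by the same amount, so if they differed at `x`, some shift
`x - t • e` would be positive for one functional and negative for the other.
-/

namespace Module.Dual

variable {𝕜 E : Type*} [Field 𝕜] [LinearOrder 𝕜] [IsStrictOrderedRing 𝕜]
  [AddCommGroup E] [Module 𝕜 E]

theorem le_of_pos_imp_nonneg {f g : Dual 𝕜 E} {e : E} (hfe : f e = 1) (hge : g e = 1)
    (hfg : ∀ x, 0 < f x → 0 ≤ g x) (x : E) : f x ≤ g x := by
  by_contra! hlt
  set t := (f x + g x) / 2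
  have hf : 0 < f (x - t • e) := by simp only [map_sub, map_smul, hfe, smul_eq_mul, t]; linarith
  have hg : g (x - t • e) < 0 := by simp only [map_sub, map_smul, hge, smul_eq_mul, t]; linarith
  exact hg.not_ge (hfg _ hf)

theorem eq_of_pos_imp_nonneg {f g : Dual 𝕜 E} {e : E} (hfe : f e = 1) (hge : g e = 1)
    (hfg : ∀ x, 0 < f x → 0 ≤ g x) (hgf : ∀ x, 0 < g x → 0 ≤ f x) : f = g :=
  LinearMap.ext fun x =>
    (le_of_pos_imp_nonneg hfe hge hfg x).antisymm (le_of_pos_imp_nonneg hge hfe hgf x)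

end Module.Dual

open Matrix in
theorem rational_decision_maker_probabilities_unique_general (m : ℕ) (Z : Set (Fin m → ℝ))
    (p q : Fin m → ℝ)
    (hp1 : ∑ i, p i = 1)
    (hpZ : {x : Fin m → ℝ | 0 < ∑ i, x i * p i} ⊆ Z)
    (hZp : Z ⊆ {x : Fin m → ℝ | 0 ≤ ∑ i, x i * p i})
    (hq1 : ∑ i, q i = 1)
    (hqZ : {x : Fin m → ℝ | 0 < ∑ i, x i * q i} ⊆ Z)
    (hZq : Z ⊆ {x : Fin m → ℝ | 0 ≤ ∑ i, x i * q i}) :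
    p = q := by
  apply (dotProductEquiv ℝ (Fin m)).injective
  refine Module.Dual.eq_of_pos_imp_nonneg (e := 1) ?_ ?_ (fun x hx ↦ ?_) (fun x hx ↦ ?_)
  · simpa [dotProduct_one] using hp1
  · simpa [dotProduct_one] using hq1
  · rw [dotProductEquiv_apply_apply, dotProduct_comm] at hx ⊢
    exact hZq (hpZ hx)
  · rw [dotProductEquiv_apply_apply, dotProduct_comm] at hx ⊢
    exact hZp (hqZ hx)

/-- Uniqueness of the normalized probability vector representing a
rational decision maker `Z ⊆ ℝ^m`. -/
theorem rational_decision_maker_probabilities_unique (m : ℕ) (Z : Set (Fin m → ℝ))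
    (h_complete : ∀ x : Fin m → ℝ, x ∈ Z ∨ -x ∈ Z)
    (h_cone : ∀ x ∈ Z, ∀ y ∈ Z, ∀ lam gam : ℝ, 0 ≤ lam → 0 ≤ gam →
      lam • x + gam • y ∈ Z)
    (h_pos : ∀ x : Fin m → ℝ, (∀ i, 0 ≤ x i) → x ∈ Z)
    (h_neg : ∀ x : Fin m → ℝ, (∀ i, x i < 0) → x ∉ Z)
    (p q : Fin m → ℝ)
    (hp0 : ∀ i, 0 ≤ p i) (hp1 : ∑ i, p i = 1)
    (hpZ : {x : Fin m → ℝ | 0 < ∑ i, x i * p i} ⊆ Z)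
    (hZp : Z ⊆ {x : Fin m → ℝ | 0 ≤ ∑ i, x i * p i})
    (hq0 : ∀ i, 0 ≤ q i) (hq1 : ∑ i, q i = 1)
    (hqZ : {x : Fin m → ℝ | 0 < ∑ i, x i * q i} ⊆ Z)
    (hZq : Z ⊆ {x : Fin m → ℝ | 0 ≤ ∑ i, x i * q i}) :
    p = q :=
  rational_decision_maker_probabilities_unique_general m Z p q hp1 hpZ hZp hq1 hqZ hZq
end

section
/- Let Z ⊆ ℝ^m be a convex cone such that Z ∪ (-Z) = ℝ^m and Z ≠ ℝ^m. Then the closure of Z is a closed half-space through the origin: there exists a nonzero linear functional f on ℝ^m with closure(Z) = {x : f(x) ≥ 0}. -/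
/-!
A point outside the closed convex cone `closure Z` is separated from it by a functional `f`
with `f ≥ 0` on `Z`. As every `x` lies in `Z` or `-Z`, the open half-space `{f > 0}` lies in `Z`,
so `closure Z` is squeezed between the closures of `{f > 0}` and `{f ≥ 0}`, which coincide.
Finite dimension is needed only for `closure Z ≠ univ`: a dense convex set affinely spans the
space, so it has nonempty interior, and then its interior is that of its closure, i.e. everything.
-/

open Set

section TopologicalVectorSpace

variable {E : Type*} [AddCommGroup E] [TopologicalSpace E] [Module ℝ E]

theorem setOf_pos_subset_of_forall_mem_or_neg_mem {s : Set E} (hs : ∀ x, x ∈ s ∨ -x ∈ s)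
    {f : StrongDual ℝ E} (hf : ∀ x ∈ s, 0 ≤ f x) : {x | 0 < f x} ⊆ s := fun x hx =>
  (hs x).resolve_right fun hneg => by
    have := hf _ hneg
    simp only [map_neg, mem_ofPred_eq] at this hx
    linarith

variable [IsTopologicalAddGroup E] [ContinuousSMul ℝ E]

theorem ContinuousLinearMap.closure_setOf_pos {f : StrongDual ℝ E} (hf : f ≠ 0) :
    closure {x | 0 < f x} = {x | 0 ≤ f x} := by
  change closure (f ⁻¹' Ioi 0) = f ⁻¹' Ici 0
  rw [← (f.isOpenMap_of_ne_zero hf).preimage_closure_eq_closure_preimage f.continuous]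
  exact congrArg (f ⁻¹' ·) (closure_Ioi 0)

theorem closure_eq_setOf_nonneg_of_forall_mem_or_neg_mem {s : Set E}
    (hs : ∀ x, x ∈ s ∨ -x ∈ s) {f : StrongDual ℝ E} (hf : ∀ x ∈ s, 0 ≤ f x) (hf₀ : f ≠ 0) :
    closure s = {x | 0 ≤ f x} := by
  refine subset_antisymm (closure_minimal hf (isClosed_le continuous_const f.continuous)) ?_
  calc {x | 0 ≤ f x} = closure {x | 0 < f x} := (f.closure_setOf_pos hf₀).symm
    _ ⊆ closure s := closure_mono (setOf_pos_subset_of_forall_mem_or_neg_mem hs hf)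

theorem PointedCone.exists_closure_eq_setOf_nonneg [LocallyConvexSpace ℝ E] (C : PointedCone ℝ E)
    (hC : ∀ x, x ∈ C ∨ -x ∈ C) (hC_closure : closure (C : Set E) ≠ univ) :
    ∃ f : StrongDual ℝ E, f ≠ 0 ∧ closure (C : Set E) = {x | 0 ≤ f x} := by
  obtain ⟨b, hb⟩ := (ne_univ_iff_exists_notMem _).1 hC_closure
  obtain ⟨f, hf, hfb⟩ := ProperCone.hyperplane_separation_point (Submodule.closure C) (x₀ := b) hb
  have hf₀ : f ≠ 0 := by rintro rfl; simp at hfb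
  exact ⟨f, hf₀, closure_eq_setOf_nonneg_of_forall_mem_or_neg_mem hC
    (fun x hx => hf x (subset_closure hx)) hf₀⟩

end TopologicalVectorSpace

theorem Convex.eq_univ_of_closure_eq_univ {V : Type*} [NormedAddCommGroup V] [NormedSpace ℝ V]
    [FiniteDimensional ℝ V] {s : Set V} (hs : Convex ℝ s) (h : closure s = univ) : s = univ := by
  have h_span : affineSpan ℝ s = ⊤ := by
    refine eq_top_iff.2 fun x _ => ?_
    refine closure_minimal (subset_affineSpan ℝ s)
      (AffineSubspace.closed_of_finiteDimensional _) ?_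
    exact h ▸ mem_univ x
  have h_int := hs.interior_closure_eq_interior_of_nonempty_interior
    (hs.interior_nonempty_iff_affineSpan_eq_top.2 h_span)
  rw [h, interior_univ] at h_int
  exact eq_univ_of_univ_subset (h_int ▸ interior_subset)

/-- A convex cone `Z ⊆ ℝ^m` with `Z ∪ (-Z) = ℝ^m` and `Z ≠ ℝ^m`
has closure equal to a closed half-space through the origin. -/
theorem closure_of_complete_cone_is_halfspace (m : ℕ) (Z : Set (Fin m → ℝ))
    (h_add : ∀ x ∈ Z, ∀ y ∈ Z, x + y ∈ Z)
    (h_smul : ∀ x ∈ Z, ∀ lam : ℝ, 0 ≤ lam → lam • x ∈ Z)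
    (h_cover : Z ∪ (-Z) = Set.univ)
    (h_proper : Z ≠ Set.univ) :
    ∃ f : (Fin m → ℝ) →ₗ[ℝ] ℝ, f ≠ 0 ∧
      closure Z = {x : Fin m → ℝ | 0 ≤ f x} := by
  have h_mem_or_neg_mem (x : Fin m → ℝ) : x ∈ Z ∨ -x ∈ Z := (h_cover ▸ mem_univ x : x ∈ Z ∪ -Z)
  let C : PointedCone ℝ (Fin m → ℝ) :=
    { carrier := Z
      add_mem' := fun hx hy => h_add _ hx _ hy
      zero_mem' := (h_mem_or_neg_mem 0).elim id fun h => neg_zero (G := Fin m → ℝ) ▸ h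
      smul_mem' := fun c x hx => h_smul x hx c c.2 }
  have hC_closure : closure (C : Set (Fin m → ℝ)) ≠ univ :=
    fun h => h_proper (C.convex.eq_univ_of_closure_eq_univ h)
  obtain ⟨f, hf₀, hf⟩ := C.exists_closure_eq_setOf_nonneg h_mem_or_neg_mem hC_closure
  exact ⟨f, ContinuousLinearMap.coe_injective.ne hf₀, hf⟩
end

section
/- Let M be a countable class of environments, each policy π and environment ν having value V_ν^π ∈ ℝ with 0 < V_ν^* := sup_π V_ν^π < ∞, so each contract sequence (V_ν^π)_ν lies in the weighted space X = ℓ^∞(1/V^*) with ‖(V_ν^π)_ν‖_X ≤ 1. If w_ν ≥ 0 satisfy Σ_ν w_ν V_ν^* < ∞, then x ↦ Σ_ν w_ν x_ν defines a positive continuous linear functional on X; and if π* maximizes Σ_ν w_ν V_ν^π over policies, then for every policy π with Σ_ν w_ν V_ν^π < Σ_ν w_ν V_ν^{π*}, the contract (V_ν^{π*} - V_ν^π)_ν has strictly positive value under this functional, hence is acceptable and not rejectable. -/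
section WeightedSum

variable {ι : Type*} {w u x y : ι → ℝ} {C : ℝ}

theorem norm_weight_mul_le (hw : ∀ i, 0 ≤ w i) (hx : ∀ i, |x i| ≤ C * u i) (i : ι) :
    ‖w i * x i‖ ≤ C * (w i * u i) := by
  rw [Real.norm_eq_abs, abs_mul, abs_of_nonneg (hw i), mul_left_comm]
  exact mul_le_mul_of_nonneg_left (hx i) (hw i)

theorem summable_weight_mul_of_abs_le (hw : ∀ i, 0 ≤ w i)
    (hu : Summable fun i => w i * u i) (hx : ∀ i, |x i| ≤ C * u i) :
    Summable fun i => w i * x i :=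
  (hu.mul_left C).of_norm_bounded (norm_weight_mul_le hw hx)

theorem abs_tsum_weight_mul_le (hw : ∀ i, 0 ≤ w i)
    (hu : Summable fun i => w i * u i) (hx : ∀ i, |x i| ≤ C * u i) :
    |∑' i, w i * x i| ≤ C * ∑' i, w i * u i :=
  tsum_of_norm_bounded (hu.hasSum.mul_left C) (norm_weight_mul_le hw hx)

theorem tsum_weight_mul_sub (hx : Summable fun i => w i * x i)
    (hy : Summable fun i => w i * y i) :
    ∑' i, w i * (x i - y i) = ∑' i, w i * x i - ∑' i, w i * y i := by
  simp_rw [mul_sub]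
  exact hx.tsum_sub hy

end WeightedSum

theorem aixi_agent_rational_general (P : Type*)
    (V : P → ℕ → ℝ) (Vstar : ℕ → ℝ)
    (hV0 : ∀ π ν, 0 ≤ V π ν)
    (hle : ∀ π ν, V π ν ≤ Vstar ν)
    (w : ℕ → ℝ) (hw : ∀ ν, 0 ≤ w ν)
    (hsum : Summable (fun ν => w ν * Vstar ν)) :
    -- each contract sequence lies in `X = ℓ^∞(1/V*)` with norm at most 1
    (∀ π ν, |V π ν| / Vstar ν ≤ 1) ∧
    -- `x ↦ Σ' w ν * x ν` is well defined and bounded on `X`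
    (∀ (x : ℕ → ℝ) (C : ℝ), (∀ ν, |x ν| ≤ C * Vstar ν) →
      Summable (fun ν => w ν * x ν) ∧
        |∑' ν, w ν * x ν| ≤ C * ∑' ν, w ν * Vstar ν) ∧
    -- positivity of the functional
    (∀ x : ℕ → ℝ, (∃ C : ℝ, ∀ ν, |x ν| ≤ C * Vstar ν) →
      (∀ ν, 0 ≤ x ν) → 0 ≤ ∑' ν, w ν * x ν) ∧
    -- the AIXI policy `π*` is strictly preferred to strictly worse policies
    (∀ πstar : P, (∀ π, ∑' ν, w ν * V π ν ≤ ∑' ν, w ν * V πstar ν) →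
      ∀ π : P, ∑' ν, w ν * V π ν < ∑' ν, w ν * V πstar ν →
        0 < ∑' ν, w ν * (V πstar ν - V π ν)) := by
  have hV_mem : ∀ π ν, |V π ν| ≤ 1 * Vstar ν := fun π ν => by
    rw [one_mul, abs_of_nonneg (hV0 π ν)]
    exact hle π ν
  refine ⟨fun π ν => ?_, fun x C hx => ?_, fun x _ hx0 => ?_, fun πstar _ π hlt => ?_⟩
  · exact div_le_one_of_le₀ (by simpa using hV_mem π ν) ((hV0 π ν).trans (hle π ν))
  · exact ⟨summable_weight_mul_of_abs_le hw hsum hx, abs_tsum_weight_mul_le hw hsum hx⟩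
  · exact tsum_nonneg fun ν => mul_nonneg (hw ν) (hx0 ν)
  · rw [tsum_weight_mul_sub (summable_weight_mul_of_abs_le hw hsum (hV_mem πstar))
      (summable_weight_mul_of_abs_le hw hsum (hV_mem π))]
    exact sub_pos.2 hlt

/-- With a countable class of environments (indexed by `ℕ`),
values `0 ≤ V π ν ≤ V* ν`, `0 < V* ν`, each contract sequence `(V π ν)_ν` lies
in `X = ℓ^∞(1/V*)` with norm `≤ 1`; weights `w ≥ 0` with `Σ w ν * V* ν < ∞`
define a positive continuous linear functional `x ↦ Σ' w ν * x ν` on `X`; and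
if `π*` maximizes `Σ' w ν * V π ν`, then for any policy `π` with strictly
smaller weighted value, the contract `(V π* ν - V π ν)_ν` has strictly positive
value under this functional (acceptable and not rejectable). -/
theorem aixi_agent_rational (P : Type*)
    (V : P → ℕ → ℝ) (Vstar : ℕ → ℝ)
    (hV0 : ∀ π ν, 0 ≤ V π ν) (hVs : ∀ ν, 0 < Vstar ν)
    (hle : ∀ π ν, V π ν ≤ Vstar ν)
    (w : ℕ → ℝ) (hw : ∀ ν, 0 ≤ w ν)
    (hsum : Summable (fun ν => w ν * Vstar ν)) :
    -- each contract sequence lies in `X = ℓ^∞(1/V*)` with norm at most 1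
    (∀ π ν, |V π ν| / Vstar ν ≤ 1) ∧
    -- `x ↦ Σ' w ν * x ν` is well defined and bounded on `X`
    (∀ (x : ℕ → ℝ) (C : ℝ), (∀ ν, |x ν| ≤ C * Vstar ν) →
      Summable (fun ν => w ν * x ν) ∧
        |∑' ν, w ν * x ν| ≤ C * ∑' ν, w ν * Vstar ν) ∧
    -- positivity of the functional
    (∀ x : ℕ → ℝ, (∃ C : ℝ, ∀ ν, |x ν| ≤ C * Vstar ν) →
      (∀ ν, 0 ≤ x ν) → 0 ≤ ∑' ν, w ν * x ν) ∧
    -- the AIXI policy `π*` is strictly preferred to strictly worse policies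
    (∀ πstar : P, (∀ π, ∑' ν, w ν * V π ν ≤ ∑' ν, w ν * V πstar ν) →
      ∀ π : P, ∑' ν, w ν * V π ν < ∑' ν, w ν * V πstar ν →
        0 < ∑' ν, w ν * (V πstar ν - V π ν)) :=
  aixi_agent_rational_general P V Vstar hV0 hle w hw hsum
end

section
/- Let M be a countable class of environments with prior weights p_{ν,0} > 0 summing over M to a finite value, and at each time k let p_{ν,k} = p_{ν,0} · I(h_k,ν) / Σ_μ p_{μ,0} I(h_k,μ) where I(h_k,ν) ∈ {0,1} indicates consistency of ν with the history h_k (so p_{μ,k} ≥ p_{μ,0} > 0 for the true environment μ, which is always consistent). Suppose relative values W_{ν,k}^π ∈ [0,1] are given, and there exist policies π_k with W_{ν,k}^{π_k} → 1 as k → ∞ for every ν consistent with the history. Let π^p at time k maximize Σ_ν p_{ν,k} W_{ν,k}^π. Then W_{μ,k}^{π^p} → 1 as k → ∞, where μ is the actual environment. -/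
/-!
Let `Δ k = ∑ ν p_{ν,k} (1 - W_{ν,k}^{π_k})`. Every environment is either eventually refuted, so
that its posterior weight vanishes, or consistent forever, so that `W_{ν,k}^{π_k} → 1`; the
posterior weights are dominated by the summable `p_{ν,0} / p_{μ,0}`, hence `Δ k → 0` by dominated
convergence. Since `π^p` maximises the posterior-expected skill,
`p_{μ,k} (1 - W_{μ,k}^{π^p}) ≤ Δ k`, and `p_{μ,k} ≥ p_{μ,0} / ∑ ν p_{ν,0}` stays bounded away
from zero.
-/

open Filter Topology

noncomputable def posterior {ι : Type*} (p0 l : ι → ℝ) (ν : ι) : ℝ :=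
  p0 ν * l ν / ∑' ν', p0 ν' * l ν'

section Posterior

variable {ι : Type*} {p0 l : ι → ℝ} {μ : ι}

theorem posterior_nonneg (hp0 : ∀ ν, 0 ≤ p0 ν) (hl0 : ∀ ν, 0 ≤ l ν) (ν : ι) :
    0 ≤ posterior p0 l ν :=
  div_nonneg (mul_nonneg (hp0 ν) (hl0 ν)) (tsum_nonneg fun ν' => mul_nonneg (hp0 ν') (hl0 ν'))

theorem posterior_of_eq_zero {ν : ι} (h : l ν = 0) : posterior p0 l ν = 0 := by
  simp [posterior, h]

variable (hp0 : ∀ ν, 0 ≤ p0 ν) (hsum : Summable p0) (hl0 : ∀ ν, 0 ≤ l ν) (hl1 : ∀ ν, l ν ≤ 1)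
include hp0 hsum hl0 hl1

theorem summable_mul_likelihood : Summable fun ν => p0 ν * l ν :=
  hsum.of_nonneg_of_le (fun ν => mul_nonneg (hp0 ν) (hl0 ν))
    fun ν => mul_le_of_le_one_right (hp0 ν) (hl1 ν)

theorem le_tsum_mul_likelihood (hlμ : l μ = 1) : p0 μ ≤ ∑' ν, p0 ν * l ν := by
  simpa [hlμ] using (summable_mul_likelihood hp0 hsum hl0 hl1).le_tsum μ
    fun ν _ => mul_nonneg (hp0 ν) (hl0 ν)

theorem posterior_le_div (hμ : 0 < p0 μ) (hlμ : l μ = 1) (ν : ι) :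
    posterior p0 l ν ≤ p0 ν / p0 μ :=
  div_le_div₀ (hp0 ν) (mul_le_of_le_one_right (hp0 ν) (hl1 ν)) hμ
    (le_tsum_mul_likelihood hp0 hsum hl0 hl1 hlμ)

theorem div_tsum_le_posterior (hμ : 0 < p0 μ) (hlμ : l μ = 1) :
    p0 μ / ∑' ν, p0 ν ≤ posterior p0 l μ := by
  rw [posterior, hlμ, mul_one]
  exact div_le_div_of_nonneg_left hμ.le
    (hμ.trans_le (le_tsum_mul_likelihood hp0 hsum hl0 hl1 hlμ))
    ((summable_mul_likelihood hp0 hsum hl0 hl1).tsum_le_tsum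
      (fun ν => mul_le_of_le_one_right (hp0 ν) (hl1 ν)) hsum)

end Posterior

section Regret

variable {ι : Type*} {q g a b : ι → ℝ}

theorem summable_mul_of_le_of_mem_Icc (hg : Summable g) (hq0 : ∀ ν, 0 ≤ q ν)
    (hqg : ∀ ν, q ν ≤ g ν) (ha0 : ∀ ν, 0 ≤ a ν) (ha1 : ∀ ν, a ν ≤ 1) :
    Summable fun ν => q ν * a ν :=
  hg.of_nonneg_of_le (fun ν => mul_nonneg (hq0 ν) (ha0 ν))
    fun ν => (mul_le_of_le_one_right (hq0 ν) (ha1 ν)).trans (hqg ν)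

theorem mul_one_sub_le_tsum_of_tsum_mul_le (hg : Summable g) (hq0 : ∀ ν, 0 ≤ q ν)
    (hqg : ∀ ν, q ν ≤ g ν) (ha0 : ∀ ν, 0 ≤ a ν) (ha1 : ∀ ν, a ν ≤ 1)
    (hb0 : ∀ ν, 0 ≤ b ν) (hb1 : ∀ ν, b ν ≤ 1)
    (hab : ∑' ν, q ν * a ν ≤ ∑' ν, q ν * b ν) (μ : ι) :
    q μ * (1 - b μ) ≤ ∑' ν, q ν * (1 - a ν) := by
  have hq : Summable q := hg.of_nonneg_of_le hq0 hqg
  have hqa := summable_mul_of_le_of_mem_Icc hg hq0 hqg ha0 ha1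
  have hqb := summable_mul_of_le_of_mem_Icc hg hq0 hqg hb0 hb1
  simp only [mul_one_sub]
  calc q μ - q μ * b μ
      ≤ ∑' ν, (q ν - q ν * b ν) :=
        (hq.sub hqb).le_tsum μ fun ν _ => sub_nonneg.2 (mul_le_of_le_one_right (hq0 ν) (hb1 ν))
    _ = ∑' ν, q ν - ∑' ν, q ν * b ν := hq.tsum_sub hqb
    _ ≤ ∑' ν, q ν - ∑' ν, q ν * a ν := by linarith
    _ = ∑' ν, (q ν - q ν * a ν) := (hq.tsum_sub hqa).symm

variable {α : Type*} {L : Filter α} {Q A B : α → ι → ℝ}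

theorem tendsto_tsum_mul_one_sub_zero (hg : Summable g) (hQ0 : ∀ k ν, 0 ≤ Q k ν)
    (hQg : ∀ k ν, Q k ν ≤ g ν) (hA0 : ∀ k ν, 0 ≤ A k ν) (hA1 : ∀ k ν, A k ν ≤ 1)
    (hlearn : ∀ ν, (∀ᶠ k in L, Q k ν = 0) ∨ Tendsto (A · ν) L (𝓝 1)) :
    Tendsto (fun k => ∑' ν, Q k ν * (1 - A k ν)) L (𝓝 0) := by
  have hbound : ∀ k ν, ‖Q k ν * (1 - A k ν)‖ ≤ g ν := fun k ν => by
    rw [Real.norm_of_nonneg (mul_nonneg (hQ0 k ν) (sub_nonneg.2 (hA1 k ν)))]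
    exact (mul_le_of_le_one_right (hQ0 k ν) (sub_le_self 1 (hA0 k ν))).trans (hQg k ν)
  have hterm : ∀ ν, Tendsto (fun k => Q k ν * (1 - A k ν)) L (𝓝 0) := fun ν => by
    rcases hlearn ν with hzero | hA
    · exact tendsto_const_nhds.congr' (hzero.mono fun k hk => by simp [hk])
    · refine squeeze_zero (fun k => mul_nonneg (hQ0 k ν) (sub_nonneg.2 (hA1 k ν)))
        (fun k => mul_le_mul_of_nonneg_right (hQg k ν) (sub_nonneg.2 (hA1 k ν))) ?_
      simpa using (hA.const_sub 1).const_mul (g ν)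
  simpa using tendsto_tsum_of_dominated_convergence hg hterm (Eventually.of_forall hbound)

theorem tendsto_one_of_tsum_mul_le (hg : Summable g) (hQ0 : ∀ k ν, 0 ≤ Q k ν)
    (hQg : ∀ k ν, Q k ν ≤ g ν) (hA0 : ∀ k ν, 0 ≤ A k ν) (hA1 : ∀ k ν, A k ν ≤ 1)
    (hB0 : ∀ k ν, 0 ≤ B k ν) (hB1 : ∀ k ν, B k ν ≤ 1)
    (hlearn : ∀ ν, (∀ᶠ k in L, Q k ν = 0) ∨ Tendsto (A · ν) L (𝓝 1))
    (hopt : ∀ k, ∑' ν, Q k ν * A k ν ≤ ∑' ν, Q k ν * B k ν)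
    {μ : ι} {c : ℝ} (hc : 0 < c) (hcQ : ∀ k, c ≤ Q k μ) :
    Tendsto (B · μ) L (𝓝 1) := by
  have hregret : ∀ k, 1 - B k μ ≤ (∑' ν, Q k ν * (1 - A k ν)) / c := fun k => by
    rw [le_div_iff₀ hc, mul_comm]
    exact (mul_le_mul_of_nonneg_right (hcQ k) (sub_nonneg.2 (hB1 k μ))).trans
      (mul_one_sub_le_tsum_of_tsum_mul_le hg (hQ0 k) (hQg k) (hA0 k) (hA1 k) (hB0 k) (hB1 k)
        (hopt k) μ)
  have hΔ := (tendsto_tsum_mul_one_sub_zero hg hQ0 hQg hA0 hA1 hlearn).div_const c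
  have := squeeze_zero (fun k => sub_nonneg.2 (hB1 k μ)) hregret (by simpa using hΔ)
  simpa using this.const_sub 1

end Regret

theorem eventually_eq_zero_of_antitone {α : Type*} [Preorder α] {c : α → ℝ} (hanti : Antitone c)
    (h01 : ∀ k, c k = 0 ∨ c k = 1) (h : ¬ ∀ k, c k = 1) : ∀ᶠ k in atTop, c k = 0 := by
  push Not at h
  obtain ⟨K, hK⟩ := h
  have hK0 : c K = 0 := (h01 K).resolve_right hK
  filter_upwards [eventually_ge_atTop K] with k hk
  exact (h01 k).resolve_right fun hk1 => by linarith [hanti hk]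

/-- Asymptotic optimality: Environments are indexed by `ℕ`, `μ`
is the true environment, `cons ν k ∈ {0,1}` indicates consistency of `ν` with
the history at time `k` (monotone in `k`, with `μ` always consistent).  The
posterior weights are `p k ν = p₀ ν * cons ν k / Σ' μ', p₀ μ' * cons μ' k`.
If there are policies `π_k` with `W (π_k) ν k → 1` for every forever-consistent
`ν`, and `πp k` maximizes `Σ' ν, p k ν * W π ν k`, then `W (πp k) μ k → 1`. -/
theorem asymptotic_optimality (P : Type*)
    (W : P → ℕ → ℕ → ℝ)
    (hW0 : ∀ π ν k, 0 ≤ W π ν k) (hW1 : ∀ π ν k, W π ν k ≤ 1)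
    (μ : ℕ)
    (p0 : ℕ → ℝ) (hp0 : ∀ ν, 0 < p0 ν) (hp0sum : Summable p0)
    (cons : ℕ → ℕ → ℝ)
    (hcons01 : ∀ ν k, cons ν k = 0 ∨ cons ν k = 1)
    (hconsmono : ∀ ν k, cons ν (k + 1) ≤ cons ν k)
    (hconsμ : ∀ k, cons μ k = 1)
    (p : ℕ → ℕ → ℝ)
    (hp : ∀ k ν, p k ν = p0 ν * cons ν k / ∑' ν', p0 ν' * cons ν' k)
    (πk : ℕ → P)
    (hπk : ∀ ν, (∀ k, cons ν k = 1) →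
      Tendsto (fun k => W (πk k) ν k) atTop (nhds 1))
    (πp : ℕ → P)
    (hπp : ∀ k (π : P), ∑' ν, p k ν * W π ν k ≤ ∑' ν, p k ν * W (πp k) ν k) :
    Tendsto (fun k => W (πp k) μ k) atTop (nhds 1) := by
  have hcons0 : ∀ ν k, 0 ≤ cons ν k := fun ν k => by rcases hcons01 ν k with h | h <;> simp [h]
  have hcons1 : ∀ ν k, cons ν k ≤ 1 := fun ν k => by rcases hcons01 ν k with h | h <;> simp [h]
  have hp0' : ∀ ν, 0 ≤ p0 ν := fun ν => (hp0 ν).le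
  obtain rfl : p = fun k => posterior p0 (cons · k) := funext fun k => funext (hp k)
  refine tendsto_one_of_tsum_mul_le (hp0sum.div_const (p0 μ))
    (fun k => posterior_nonneg hp0' (hcons0 · k))
    (fun k => posterior_le_div hp0' hp0sum (hcons0 · k) (hcons1 · k) (hp0 μ) (hconsμ k))
    (fun k ν => hW0 (πk k) ν k) (fun k ν => hW1 (πk k) ν k)
    (fun k ν => hW0 (πp k) ν k) (fun k ν => hW1 (πp k) ν k)
    (fun ν => ?_) (fun k => hπp k (πk k)) (div_pos (hp0 μ) (hp0sum.tsum_pos hp0' μ (hp0 μ)))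
    (fun k => div_tsum_le_posterior hp0' hp0sum (hcons0 · k) (hcons1 · k) (hp0 μ) (hconsμ k))
  by_cases hν : ∀ k, cons ν k = 1
  · exact .inr (hπk ν hν)
  · refine .inl ((eventually_eq_zero_of_antitone ?_ (hcons01 ν) hν).mono
      fun k hk => posterior_of_eq_zero hk)
    exact antitone_nat_of_succ_le (hconsmono ν)
end
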